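/- (Hard case of Theorem 2, Rendl–Wolkowicz) Suppose a is orthogonal to the eigenspace of λmin(A) (the hard case), and set t0 := λmin(A) + aᵀ(A − λmin(A)·I)† a, where † is the Moore–Penrose pseudoinverse. Then: for t < t0, every nonzero eigenvector of D(t) for λmin(D(t)) has nonzero first component; for t > t0, every eigenvector of D(t) for λmin(D(t)) has zero first component; and for t = t0 there exists a basis of the eigenspace of λmin(D(t0)) such that exactly one basis vector has nonzero first component and all other basis vectors have zero first component. -/

import Mathlib

open Matrix

/-- The smallest eigenvalue of a real (symmetric) matrix. -/
noncomputable def lambdaMin {ι : Type} [Fintype ι] (M : Matrix ι ι ℝ) : ℝ :=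
  sInf {μ : ℝ | ∃ v : ι → ℝ, v ≠ 0 ∧ M.mulVec v = μ • v}

/-- The multiplicity of the smallest eigenvalue: the dimension of Null(M - λmin(M)·I). -/
noncomputable def eigMult {ι : Type} [Fintype ι] [DecidableEq ι] (M : Matrix ι ι ℝ) : ℕ :=
  Module.finrank ℝ (LinearMap.ker (M - lambdaMin M • (1 : Matrix ι ι ℝ)).mulVecLin)

/-- The bordered matrix D(t) = [[t, -aᵀ],[-a, A]]. -/
noncomputable def borderD {n : ℕ} (A : Matrix (Fin n) (Fin n) ℝ) (a : Fin n → ℝ) (t : ℝ) :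
    Matrix (Unit ⊕ Fin n) (Unit ⊕ Fin n) ℝ :=
  Matrix.fromBlocks (Matrix.of fun (_ : Unit) (_ : Unit) => t)
    (Matrix.of fun (_ : Unit) (j : Fin n) => -a j)
    (Matrix.of fun (i : Fin n) (_ : Unit) => -a i) A

/-- The bordered matrix D(t,λ) = [[t, (-a + (λ/2)b)ᵀ],[-a + (λ/2)b, A]]. -/
noncomputable def borderD2 {n : ℕ} (A : Matrix (Fin n) (Fin n) ℝ) (a b : Fin n → ℝ)
    (t l : ℝ) : Matrix (Unit ⊕ Fin n) (Unit ⊕ Fin n) ℝ :=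
  borderD A (fun j => a j - (l / 2) * b j) t

/-- The objective xᵀAx - 2aᵀx. -/
noncomputable def objQ {n : ℕ} (A : Matrix (Fin n) (Fin n) ℝ) (a : Fin n → ℝ)
    (x : Fin n → ℝ) : ℝ :=
  x ⬝ᵥ A.mulVec x - 2 * (a ⬝ᵥ x)

/-- The optimal value p* of eTRS. -/
noncomputable def pstar {n : ℕ} (A : Matrix (Fin n) (Fin n) ℝ) (a b : Fin n → ℝ)
    (c Δ : ℝ) : ℝ :=
  sInf {v : ℝ | ∃ x : Fin n → ℝ, x ⬝ᵥ x ≤ Δ ∧ b ⬝ᵥ x ≤ c ∧ v = objQ A a x}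

/-- The Lagrangian of eTRS. -/
noncomputable def lagr {n : ℕ} (A : Matrix (Fin n) (Fin n) ℝ) (a b : Fin n → ℝ)
    (c Δ : ℝ) (x : Fin n → ℝ) (l1 l2 : ℝ) : ℝ :=
  objQ A a x + l1 * (x ⬝ᵥ x - Δ) + l2 * (b ⬝ᵥ x - c)

/-- The Lagrangian dual value d* of eTRS:
the supremum over λ1, λ2 ≥ 0 of inf_x of the Lagrangian, encoded as the supremum of all
values that are lower bounds of the Lagrangian for some admissible multipliers. -/
noncomputable def dstar {n : ℕ} (A : Matrix (Fin n) (Fin n) ℝ) (a b : Fin n → ℝ)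
    (c Δ : ℝ) : ℝ :=
  sSup {v : ℝ | ∃ l1 l2 : ℝ, 0 ≤ l1 ∧ 0 ≤ l2 ∧ ∀ x : Fin n → ℝ, v ≤ lagr A a b c Δ x l1 l2}

/-- x is a global optimal solution of eTRS. -/
def isOptimal {n : ℕ} (A : Matrix (Fin n) (Fin n) ℝ) (a b : Fin n → ℝ)
    (c Δ : ℝ) (x : Fin n → ℝ) : Prop :=
  x ⬝ᵥ x ≤ Δ ∧ b ⬝ᵥ x ≤ c ∧
    ∀ y : Fin n → ℝ, y ⬝ᵥ y ≤ Δ → b ⬝ᵥ y ≤ c → objQ A a x ≤ objQ A a y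

/-- The dual objective k(t,λ) = (Δ+1)·λmin(D(t,λ)) - t - λc. -/
noncomputable def ktl {n : ℕ} (A : Matrix (Fin n) (Fin n) ℝ) (a b : Fin n → ℝ)
    (c Δ : ℝ) (t l : ℝ) : ℝ :=
  (Δ + 1) * lambdaMin (borderD2 A a b t l) - t - l * c

/-!
Let `δ = λmin(A)`, write `y = (y₀, ȳ)` and let `w` solve `(A - δ)w = a`. Completing the square
with `a = (A - δ)w` gives
`yᵀ(D(t) - δ)y = (t - t₀) y₀² + zᵀ(A - δ)z` with `z = ȳ - y₀ w`, and the last term is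
nonnegative. In the hard case `(0, v)` is an eigenvector of `D(t)` for `δ` whenever `v` is one
of `A`, so `λmin(D(t)) ≤ δ`. For an eigenvector `y` of `λmin(D(t))` the identity yields
`(t - t₀) y₀² ≤ (λmin(D(t)) - δ) |y|²`, which forces `y₀ = 0` when `t > t₀` and gives
`λmin(D(t₀)) = δ`. For `t < t₀` the Rayleigh quotient at `(1, w)` is below `δ`, so
`λmin(D(t)) < δ`, which rules out `y₀ = 0`. Finally `(1, w)` is a `δ`-eigenvector of `D(t₀)`,
so that eigenspace has a basis made of `(1, w)` and a basis of its intersection with `{y₀ = 0}`.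
-/

namespace Matrix

variable {ι : Type} [Fintype ι] {M : Matrix ι ι ℝ}

lemma dotProduct_self_pos_of_ne_zero {v : ι → ℝ} (hv : v ≠ 0) : 0 < v ⬝ᵥ v := by
  simpa using dotProduct_star_self_pos_iff.mpr hv

lemma lambdaMin_eq_of_forall_mul_dotProduct_self_le {μ : ℝ} {v : ι → ℝ} (hv : v ≠ 0)
    (hMv : M *ᵥ v = μ • v) (hμ : ∀ x, μ * (x ⬝ᵥ x) ≤ x ⬝ᵥ M *ᵥ x) : lambdaMin M = μ := by
  refine IsLeast.csInf_eq ⟨⟨v, hv, hMv⟩, ?_⟩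
  rintro ν ⟨u, hu, hMu⟩
  have h := hμ u
  rw [hMu, dotProduct_smul, smul_eq_mul] at h
  exact le_of_mul_le_mul_right h (dotProduct_self_pos_of_ne_zero hu)

variable [DecidableEq ι] [Nonempty ι]

lemma IsHermitian.exists_eigenvalue_mul_dotProduct_self_le (hM : M.IsHermitian) :
    ∃ μ : ℝ, (∃ v, v ≠ 0 ∧ M *ᵥ v = μ • v) ∧ ∀ x, μ * (x ⬝ᵥ x) ≤ x ⬝ᵥ M *ᵥ x := by
  set T := toEuclideanLin M
  have hT : T.IsSymmetric := isSymmetric_toEuclideanLin_iff.mpr hM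
  set μ := ⨅ x : {x : EuclideanSpace ℝ ι // x ≠ 0},
    RCLike.re (inner ℝ (T x) (x : EuclideanSpace ℝ ι)) / ‖(x : EuclideanSpace ℝ ι)‖ ^ 2
  obtain ⟨v, hv⟩ := hT.hasEigenvalue_iInf_of_finiteDimensional.exists_hasEigenvector
  refine ⟨μ, ⟨v.ofLp, by simpa using hv.2, congrArg WithLp.ofLp hv.apply_eq_smul⟩, fun x => ?_⟩
  rcases eq_or_ne x 0 with rfl | hx
  · simp
  have hbdd : BddBelow (Set.range fun x : {x : EuclideanSpace ℝ ι // x ≠ 0} =>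
      RCLike.re (inner ℝ (T x) (x : EuclideanSpace ℝ ι)) / ‖(x : EuclideanSpace ℝ ι)‖ ^ 2) :=
    ⟨-‖LinearMap.toContinuousLinearMap T‖, by
      rintro _ ⟨x, rfl⟩
      exact (abs_le.mp ((LinearMap.toContinuousLinearMap T).rayleighQuotient_le_norm x)).1⟩
  have hle := ciInf_le hbdd ⟨WithLp.toLp 2 x, by simpa using hx⟩
  have hnorm : ‖WithLp.toLp 2 x‖ ^ 2 = x ⬝ᵥ x := by
    rw [← real_inner_self_eq_norm_sq, EuclideanSpace.inner_eq_star_dotProduct]; simp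
  simp only [T, toLpLin_apply, EuclideanSpace.inner_eq_star_dotProduct, hnorm] at hle
  simp only [ne_eq, star_trivial, RCLike.re_to_real] at hle
  rwa [le_div_iff₀ (dotProduct_self_pos_of_ne_zero hx), dotProduct_comm] at hle

lemma IsHermitian.exists_mulVec_eq_lambdaMin_smul (hM : M.IsHermitian) :
    ∃ v, v ≠ 0 ∧ M *ᵥ v = lambdaMin M • v := by
  obtain ⟨μ, ⟨v, hv, hMv⟩, hμ⟩ := hM.exists_eigenvalue_mul_dotProduct_self_le
  rw [lambdaMin_eq_of_forall_mul_dotProduct_self_le hv hMv hμ]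
  exact ⟨v, hv, hMv⟩

lemma IsHermitian.lambdaMin_mul_dotProduct_self_le (hM : M.IsHermitian) (x : ι → ℝ) :
    lambdaMin M * (x ⬝ᵥ x) ≤ x ⬝ᵥ M *ᵥ x := by
  obtain ⟨μ, ⟨v, hv, hMv⟩, hμ⟩ := hM.exists_eigenvalue_mul_dotProduct_self_le
  rw [lambdaMin_eq_of_forall_mul_dotProduct_self_le hv hMv hμ]
  exact hμ x

lemma IsHermitian.lambdaMin_le_of_mulVec_eq_smul (hM : M.IsHermitian) {μ : ℝ} {v : ι → ℝ}
    (hv : v ≠ 0) (hMv : M *ᵥ v = μ • v) : lambdaMin M ≤ μ := by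
  have h := hM.lambdaMin_mul_dotProduct_self_le v
  rw [hMv, dotProduct_smul, smul_eq_mul] at h
  exact le_of_mul_le_mul_right h (dotProduct_self_pos_of_ne_zero hv)

lemma IsHermitian.dotProduct_sub_lambdaMin_smul_mulVec_nonneg (hM : M.IsHermitian)
    (x : ι → ℝ) : 0 ≤ x ⬝ᵥ (M - lambdaMin M • 1) *ᵥ x := by
  have h := hM.lambdaMin_mul_dotProduct_self_le x
  rw [sub_mulVec, smul_mulVec, one_mulVec, dotProduct_sub, dotProduct_smul, smul_eq_mul]
  linarith

end Matrix

theorem Submodule.exists_linearIndependent_span_eq_of_apply_ne_zero {K V : Type*} [Field K]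
    [AddCommGroup V] [Module K V] [FiniteDimensional K V] (S : Submodule K V) (φ : V →ₗ[K] K)
    {y : V} (hyS : y ∈ S) (hy : φ y ≠ 0) :
    ∃ (k : ℕ) (f : Fin k → V), LinearIndependent K f ∧ span K (Set.range f) = S ∧
      ∃ i0, φ (f i0) ≠ 0 ∧ ∀ i, i ≠ i0 → φ (f i) = 0 := by
  set S₀ := LinearMap.ker φ ⊓ S
  let b := Module.finBasis K S₀
  have hspan : span K (Set.range (S₀.subtype ∘ b)) = S₀ := by
    rw [Set.range_comp, ← Submodule.map_span, b.span_eq, Submodule.map_top,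
      Submodule.range_subtype]
  refine ⟨_, Fin.cons y (S₀.subtype ∘ b), ?_, ?_, 0, by simpa using hy, fun i hi => ?_⟩
  · rw [linearIndependent_finCons, hspan]
    exact ⟨b.linearIndependent.map' _ S₀.ker_subtype, fun h => hy (LinearMap.mem_ker.mp h.1)⟩
  · rw [Fin.range_cons, span_insert, hspan,
      ← sup_inf_assoc_of_le _ ((span_singleton_le_iff_mem _ _).mpr hyS),
      LinearMap.span_singleton_sup_ker_eq_top φ hy, top_inf_eq]
  · obtain ⟨j, rfl⟩ := Fin.exists_succ_eq.mpr hi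
    simpa using (b j).2.1

section Bordered

variable {n : ℕ} {A : Matrix (Fin n) (Fin n) ℝ} (a : Fin n → ℝ) (t : ℝ)

variable (A) in
lemma borderD_mulVec (y : Unit ⊕ Fin n → ℝ) :
    borderD A a t *ᵥ y = Sum.elim (fun _ => t * y (.inl ()) - a ⬝ᵥ y ∘ .inr)
      (A *ᵥ y ∘ .inr - y (.inl ()) • a) := by
  rw [borderD, fromBlocks_mulVec]
  congr 1 <;> ext <;>
    simp only [mulVec, dotProduct, of_apply, Function.comp_apply, Finset.univ_unique,
      PUnit.default_eq_unit, Finset.sum_singleton, neg_mul, Finset.sum_neg_distrib, Pi.add_apply,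
      Pi.sub_apply, Pi.smul_apply, smul_eq_mul] <;>
    ring

lemma dotProduct_unit_sum (y z : Unit ⊕ Fin n → ℝ) :
    y ⬝ᵥ z = y (.inl ()) * z (.inl ()) + y ∘ .inr ⬝ᵥ z ∘ .inr := by
  simp [dotProduct, Fintype.sum_sum_type]

lemma borderD_isHermitian (hA : A.IsHermitian) : (borderD A a t).IsHermitian :=
  .fromBlocks (by ext; simp) (by ext; simp) hA

lemma dotProduct_borderD_mulVec (hA : A.IsHermitian) {δ : ℝ} {w : Fin n → ℝ}
    (hw : (A - δ • 1) *ᵥ w = a) (y : Unit ⊕ Fin n → ℝ) :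
    y ⬝ᵥ borderD A a t *ᵥ y = δ * (y ⬝ᵥ y) + (t - (δ + a ⬝ᵥ w)) * y (.inl ()) ^ 2 +
      (y ∘ .inr - y (.inl ()) • w) ⬝ᵥ (A - δ • 1) *ᵥ (y ∘ .inr - y (.inl ()) • w) := by
  set B := A - δ • (1 : Matrix (Fin n) (Fin n) ℝ)
  have hAB : A = B + δ • 1 := by simp [B]
  have hBT : Bᵀ = B := by
    have hAT : Aᵀ = A := by simpa using hA.eq
    simp [B, hAT]
  have hB : ∀ u v, u ⬝ᵥ B *ᵥ v = v ⬝ᵥ B *ᵥ u := fun u v => by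
    rw [dotProduct_comm, ← vecMul_transpose, hBT, dotProduct_mulVec]
  subst hw
  rw [dotProduct_unit_sum, dotProduct_unit_sum y y, borderD_mulVec, hAB]
  simp only [Sum.elim_inl, Sum.elim_comp_inr, add_mulVec, smul_mulVec, one_mulVec, mulVec_sub,
    mulVec_smul, dotProduct_sub, dotProduct_add, sub_dotProduct, dotProduct_smul, smul_dotProduct,
    smul_eq_mul, hB w (y ∘ .inr), dotProduct_comm (B *ᵥ w)]
  ring

lemma mul_sq_le_of_borderD_mulVec_eq_smul [Nonempty (Fin n)] (hA : A.IsHermitian)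
    {w : Fin n → ℝ} (hw : (A - lambdaMin A • 1) *ᵥ w = a) {μ : ℝ} {y : Unit ⊕ Fin n → ℝ}
    (hDy : borderD A a t *ᵥ y = μ • y) :
    (t - (lambdaMin A + a ⬝ᵥ w)) * y (.inl ()) ^ 2 ≤ (μ - lambdaMin A) * (y ⬝ᵥ y) := by
  have h := dotProduct_borderD_mulVec a t hA hw y
  rw [hDy, dotProduct_smul, smul_eq_mul] at h
  nlinarith [hA.dotProduct_sub_lambdaMin_smul_mulVec_nonneg (y ∘ .inr - y (.inl ()) • w)]

lemma lambdaMin_borderD_lt (hA : A.IsHermitian) {δ : ℝ} {w : Fin n → ℝ}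
    (hw : (A - δ • 1) *ᵥ w = a) (ht : t < δ + a ⬝ᵥ w) : lambdaMin (borderD A a t) < δ := by
  set y : Unit ⊕ Fin n → ℝ := Sum.elim (fun _ => 1) w
  have hy : y ≠ 0 := fun h => one_ne_zero (congrFun h (.inl ()))
  have hRayleigh := (borderD_isHermitian a t hA).lambdaMin_mul_dotProduct_self_le y
  rw [dotProduct_borderD_mulVec a t hA hw y] at hRayleigh
  have hy_inl : y (.inl ()) = 1 := rfl
  have hy_inr : y ∘ .inr = w := rfl
  rw [hy_inl, hy_inr, one_smul, sub_self, mulVec_zero, dotProduct_zero, one_pow, mul_one,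
    add_zero] at hRayleigh
  nlinarith [dotProduct_self_pos_of_ne_zero hy]

lemma lambdaMin_borderD_le [Nonempty (Fin n)] (hA : A.IsHermitian)
    (hhard : ∀ v, A *ᵥ v = lambdaMin A • v → a ⬝ᵥ v = 0) :
    lambdaMin (borderD A a t) ≤ lambdaMin A := by
  obtain ⟨v, hv, hAv⟩ := hA.exists_mulVec_eq_lambdaMin_smul
  refine (borderD_isHermitian a t hA).lambdaMin_le_of_mulVec_eq_smul
    (v := Sum.elim (fun _ => 0) v) (fun h => hv (funext fun i => congrFun h (.inr i))) ?_
  rw [borderD_mulVec]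
  ext (u | i) <;> simp [hhard v hAv, hAv]

lemma borderD_mulVec_one_elim {δ : ℝ} {w : Fin n → ℝ} (hw : (A - δ • 1) *ᵥ w = a) :
    borderD A a (δ + a ⬝ᵥ w) *ᵥ Sum.elim (fun _ => 1) w = δ • Sum.elim (fun _ => 1) w := by
  rw [borderD_mulVec, ← hw]
  ext (u | i) <;> simp [sub_mulVec, smul_mulVec]

end Bordered

section HardCase

variable {n : ℕ} [Nonempty (Fin n)] {A : Matrix (Fin n) (Fin n) ℝ} {a w : Fin n → ℝ} {t : ℝ}
  {y : Unit ⊕ Fin n → ℝ}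

lemma borderD_eigenvector_inl_ne_zero (hA : A.IsHermitian)
    (hw : (A - lambdaMin A • 1) *ᵥ w = a) (ht : t < lambdaMin A + a ⬝ᵥ w) (hy : y ≠ 0)
    (hDy : borderD A a t *ᵥ y = lambdaMin (borderD A a t) • y) : y (.inl ()) ≠ 0 := by
  intro hy₀
  have h := mul_sq_le_of_borderD_mulVec_eq_smul a t hA hw hDy
  rw [hy₀, zero_pow two_ne_zero, mul_zero] at h
  have hlt := lambdaMin_borderD_lt a t hA hw ht
  nlinarith [dotProduct_self_pos_of_ne_zero hy]

lemma borderD_eigenvector_inl_eq_zero (hA : A.IsHermitian)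
    (hhard : ∀ v, A *ᵥ v = lambdaMin A • v → a ⬝ᵥ v = 0)
    (hw : (A - lambdaMin A • 1) *ᵥ w = a) (ht : lambdaMin A + a ⬝ᵥ w < t)
    (hDy : borderD A a t *ᵥ y = lambdaMin (borderD A a t) • y) : y (.inl ()) = 0 := by
  have h := mul_sq_le_of_borderD_mulVec_eq_smul a t hA hw hDy
  have hle := lambdaMin_borderD_le a t hA hhard
  have hyy : 0 ≤ y ⬝ᵥ y := by simpa using dotProduct_star_self_nonneg y
  have hsq : y (.inl ()) ^ 2 ≤ 0 := by
    nlinarith [mul_nonpos_of_nonpos_of_nonneg (sub_nonpos.2 hle) hyy]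
  exact pow_eq_zero_iff two_ne_zero |>.mp (le_antisymm hsq (sq_nonneg _))

lemma lambdaMin_borderD_eq (hA : A.IsHermitian)
    (hhard : ∀ v, A *ᵥ v = lambdaMin A • v → a ⬝ᵥ v = 0)
    (hw : (A - lambdaMin A • 1) *ᵥ w = a) :
    lambdaMin (borderD A a (lambdaMin A + a ⬝ᵥ w)) = lambdaMin A := by
  refine le_antisymm (lambdaMin_borderD_le a _ hA hhard) ?_
  obtain ⟨y, hy, hDy⟩ := (borderD_isHermitian a _ hA).exists_mulVec_eq_lambdaMin_smul
  have h := mul_sq_le_of_borderD_mulVec_eq_smul a _ hA hw hDy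
  rw [sub_self, zero_mul] at h
  nlinarith [dotProduct_self_pos_of_ne_zero hy]

end HardCase

/-- In the hard case `a` lies in the range of `A - λmin(A)·I`, and
`aᵀ(A - λmin(A)·I)†a = aᵀw` for every solution `w` of `(A - λmin(A)·I)w = a`. -/
theorem stmt3_general {n : ℕ} (hn : 1 ≤ n) (A : Matrix (Fin n) (Fin n) ℝ) (hA : A.IsHermitian)
    (a : Fin n → ℝ)
    (hhard : ∀ v : Fin n → ℝ, A.mulVec v = lambdaMin A • v → a ⬝ᵥ v = 0)
    (w : Fin n → ℝ) (hw : (A - lambdaMin A • (1 : Matrix (Fin n) (Fin n) ℝ)).mulVec w = a)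
    (t0 : ℝ) (ht0 : t0 = lambdaMin A + a ⬝ᵥ w) :
    (∀ t : ℝ, t < t0 → ∀ y : Unit ⊕ Fin n → ℝ, y ≠ 0 →
        (borderD A a t).mulVec y = lambdaMin (borderD A a t) • y →
        y (Sum.inl ()) ≠ 0) ∧
    (∀ t : ℝ, t0 < t → ∀ y : Unit ⊕ Fin n → ℝ,
        (borderD A a t).mulVec y = lambdaMin (borderD A a t) • y →
        y (Sum.inl ()) = 0) ∧
    (∃ (k : ℕ) (f : Fin k → (Unit ⊕ Fin n → ℝ)),
        LinearIndependent ℝ f ∧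
        Submodule.span ℝ (Set.range f) =
          LinearMap.ker ((borderD A a t0 - lambdaMin (borderD A a t0) •
            (1 : Matrix (Unit ⊕ Fin n) (Unit ⊕ Fin n) ℝ)).mulVecLin) ∧
        ∃ i0 : Fin k, f i0 (Sum.inl ()) ≠ 0 ∧
          ∀ i : Fin k, i ≠ i0 → f i (Sum.inl ()) = 0) := by
  have : Nonempty (Fin n) := ⟨⟨0, hn⟩⟩
  subst ht0
  refine ⟨fun t ht y hy hDy => borderD_eigenvector_inl_ne_zero hA hw ht hy hDy,
    fun t ht y hDy => borderD_eigenvector_inl_eq_zero hA hhard hw ht hDy, ?_⟩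
  rw [lambdaMin_borderD_eq hA hhard hw]
  refine Submodule.exists_linearIndependent_span_eq_of_apply_ne_zero _ (.proj (.inl ()))
    (y := Sum.elim (fun _ => 1) w) ?_ one_ne_zero
  simp [borderD_mulVec_one_elim a hw]

/-- Hard case of Theorem 2 (Rendl–Wolkowicz).
Here `w` is any solution of (A − λmin(A)·I)w = a, so that
t0 = λmin(A) + aᵀ(A − λmin(A)·I)†a = λmin(A) + aᵀw (in the hard case aᵀw is
independent of the choice of solution w). -/
theorem stmt3 {n : ℕ} (hn : 1 ≤ n) (A : Matrix (Fin n) (Fin n) ℝ) (hA : A.IsHermitian)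
    (a : Fin n → ℝ) (Δ : ℝ) (hΔ : 0 < Δ)
    (hhard : ∀ v : Fin n → ℝ, A.mulVec v = lambdaMin A • v → a ⬝ᵥ v = 0)
    (w : Fin n → ℝ) (hw : (A - lambdaMin A • (1 : Matrix (Fin n) (Fin n) ℝ)).mulVec w = a)
    (t0 : ℝ) (ht0 : t0 = lambdaMin A + a ⬝ᵥ w) :
    (∀ t : ℝ, t < t0 → ∀ y : Unit ⊕ Fin n → ℝ, y ≠ 0 →
        (borderD A a t).mulVec y = lambdaMin (borderD A a t) • y →
        y (Sum.inl ()) ≠ 0) ∧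
    (∀ t : ℝ, t0 < t → ∀ y : Unit ⊕ Fin n → ℝ,
        (borderD A a t).mulVec y = lambdaMin (borderD A a t) • y →
        y (Sum.inl ()) = 0) ∧
    (∃ (k : ℕ) (f : Fin k → (Unit ⊕ Fin n → ℝ)),
        LinearIndependent ℝ f ∧
        Submodule.span ℝ (Set.range f) =
          LinearMap.ker ((borderD A a t0 - lambdaMin (borderD A a t0) •
            (1 : Matrix (Unit ⊕ Fin n) (Unit ⊕ Fin n) ℝ)).mulVecLin) ∧
        ∃ i0 : Fin k, f i0 (Sum.inl ()) ≠ 0 ∧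
          ∀ i : Fin k, i ≠ i0 → f i (Sum.inl ()) = 0) :=
  stmt3_general hn A hA a hhard w hw t0 ht0
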